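/- Let Θ be a d×d integer matrix each of whose columns is a nonzero 0-1 vector. Then the polynomial q_Θ belongs to the ideal I if and only if det Θ is odd. -/

import Mathlib

open MvPolynomial
open scoped Matrix

/-!
Write a point of `{±1}^d` as `ε = (-1)^s` with `s ∈ 𝔽₂^d`. Then `ε^θ = (-1)^(s ⬝ θ)`, so the
factor `(1 + ε^θ)/2` is `1` or `0` according as `s ⬝ θ` vanishes in `𝔽₂` or not, and
`q_Θ((-1)^s)` is `1` if `s` lies in the left kernel of `Θ mod 2` and `0` otherwise.
Hence `q_Θ` vanishes on `Z'` iff that kernel is trivial, i.e. iff `det Θ` is odd.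
-/

/-- For a `d×d` integer matrix `Θ` with 0-1 columns, the polynomial
`q_Θ(z) = ∏_{columns θ of Θ} (1 + z^θ)/2`, where `z^θ = z₁^{θ₁}⋯z_d^{θ_d}`. -/
noncomputable def qpoly {d : ℕ} (Θ : Matrix (Fin d) (Fin d) ℤ) : MvPolynomial (Fin d) ℝ :=
  ∏ c : Fin d, (C (1 / 2 : ℝ) * (1 + ∏ i : Fin d, X i ^ (Θ i c).toNat))

section SignPoint

variable {ι : Type*}

noncomputable def signPoint (s : ι → ZMod 2) : ι → ℝ := fun i => (-1) ^ (s i).val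

lemma signPoint_eq_neg_one_or_one (s : ι → ZMod 2) (i : ι) :
    signPoint s i = -1 ∨ signPoint s i = 1 := by
  unfold signPoint
  rcases neg_one_pow_eq_or ℝ (s i).val with h | h <;> simp [h]

lemma exists_signPoint_eq {ε : ι → ℝ} (hε : ∀ i, ε i = -1 ∨ ε i = 1) :
    ∃ s, signPoint s = ε := by
  refine ⟨fun i => if ε i = 1 then 0 else 1, funext fun i => ?_⟩
  rcases hε i with h | h <;> simp [signPoint, h, show (-1 : ℝ) ≠ 1 by norm_num,
    show (1 : ZMod 2).val = 1 from rfl]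

lemma signPoint_eq_one_iff (s : ι → ZMod 2) : signPoint s = 1 ↔ s = 0 := by
  simp only [funext_iff, signPoint, Pi.one_apply, Pi.zero_apply]
  refine forall_congr' fun i => ?_
  rw [neg_one_pow_eq_one_iff_even (by norm_num), ← ZMod.natCast_eq_zero_iff_even,
    ZMod.natCast_zmod_val]

variable {κ : Type*} [Fintype ι]

lemma prod_signPoint_pow (Θ : Matrix ι κ ℤ) (s : ι → ZMod 2) (c : κ) :
    ∏ i, signPoint s i ^ (Θ i c).toNat = (-1) ^ ∑ i, (s i).val * (Θ i c).toNat := by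
  simp only [signPoint, ← pow_mul, Finset.prod_pow_eq_pow_sum]

lemma natCast_sum_val_mul_toNat {Θ : Matrix ι κ ℤ} (hΘ : ∀ i c, 0 ≤ Θ i c)
    (s : ι → ZMod 2) (c : κ) :
    ((∑ i, (s i).val * (Θ i c).toNat : ℕ) : ZMod 2) = (s ᵥ* Θ.map (Int.cast : ℤ → ZMod 2)) c := by
  simp only [Matrix.vecMul, dotProduct, Matrix.map_apply, Nat.cast_sum, Nat.cast_mul,
    ZMod.natCast_zmod_val]
  refine Finset.sum_congr rfl fun i _ => ?_
  rw [← Int.cast_natCast, Int.toNat_of_nonneg (hΘ i c)]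

end SignPoint

lemma half_one_add_neg_one_pow (n : ℕ) :
    (1 / 2 : ℝ) * (1 + (-1) ^ n) = if (n : ZMod 2) = 0 then 1 else 0 := by
  by_cases hn : Even n <;> simp [neg_one_pow_eq_ite, ZMod.natCast_eq_zero_iff_even, hn]
  norm_num

lemma eval_signPoint_qpoly {d : ℕ} {Θ : Matrix (Fin d) (Fin d) ℤ} (hΘ : ∀ i c, 0 ≤ Θ i c)
    (s : Fin d → ZMod 2) :
    eval (signPoint s) (qpoly Θ) = if s ᵥ* Θ.map (Int.cast : ℤ → ZMod 2) = 0 then 1 else 0 := by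
  simp only [qpoly, map_prod, map_mul, map_add, map_one, map_pow, eval_C, eval_X,
    prod_signPoint_pow, half_one_add_neg_one_pow, natCast_sum_val_mul_toNat hΘ,
    Finset.prod_ite_zero, Finset.prod_const_one, Finset.mem_univ, true_implies,
    _root_.funext_iff, Pi.zero_apply]

lemma odd_det_iff_det_map_ne_zero {n : Type*} [Fintype n] [DecidableEq n] (A : Matrix n n ℤ) :
    Odd A.det ↔ (A.map (Int.cast : ℤ → ZMod 2)).det ≠ 0 := by
  rw [← Int.not_even_iff_odd, ← ZMod.intCast_eq_zero_iff_even, Int.cast_det]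

theorem stmt_1_general (d : ℕ) (Θ : Matrix (Fin d) (Fin d) ℤ)
    (h01 : ∀ i c, Θ i c = 0 ∨ Θ i c = 1) :
    (∀ ε : Fin d → ℝ, (∀ i, ε i = -1 ∨ ε i = 1) → ε ≠ (fun _ => 1) →
      eval ε (qpoly Θ) = 0) ↔ Odd Θ.det := by
  have hΘ : ∀ i c, 0 ≤ Θ i c := fun i c => by rcases h01 i c with h | h <;> simp [h]
  rw [odd_det_iff_det_map_ne_zero, Ne, ← Matrix.exists_vecMul_eq_zero_iff, not_exists]
  constructor
  · rintro hvanish s ⟨hs, hker⟩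
    simpa [eval_signPoint_qpoly hΘ, hker] using
      hvanish (signPoint s) (signPoint_eq_neg_one_or_one s) ((signPoint_eq_one_iff s).not.mpr hs)
  · rintro htrivial ε hε hε1
    obtain ⟨s, rfl⟩ := exists_signPoint_eq hε
    rw [eval_signPoint_qpoly hΘ, if_neg fun hker => htrivial s ⟨?_, hker⟩]
    exact (signPoint_eq_one_iff s).not.mp hε1

/-- If each column of `Θ` is a nonzero 0-1 vector, then `q_Θ` vanishes on
`Z' = {ε ∈ {−1,1}^d : ε ≠ (1,…,1)}` if and only if `det Θ` is odd. -/
theorem stmt_1 (d : ℕ) (hd : 1 ≤ d) (Θ : Matrix (Fin d) (Fin d) ℤ)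
    (h01 : ∀ i c, Θ i c = 0 ∨ Θ i c = 1)
    (hnz : ∀ c, ∃ i, Θ i c ≠ 0) :
    (∀ ε : Fin d → ℝ, (∀ i, ε i = -1 ∨ ε i = 1) → ε ≠ (fun _ => 1) →
      eval ε (qpoly Θ) = 0) ↔ Odd Θ.det :=
  stmt_1_general d Θ h01
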